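/- arXiv:1901.00584 — 3 statements merged into one kernel-verified Lean document; each statement's English description precedes it below -/
import Mathlib

section
/- For complex numbers a, b, q with |q| < 1 and bq^n ≠ 1 for all n ≥ 1, we have Σ_{j≥0} (-b/a;q)_j a^j q^{j(j+1)/2} / ((q;q)_j (bq;q)_j) = (-aq;q)_∞ / (bq;q)_∞, where a^j (-b/a;q)_j is interpreted as the polynomial ∏_{k=0}^{j-1}(a + b q^k). -/
/-!
Expanding `(-aq;q)_n` in Gaussian binomials gives the finite identity
`∑_{j ≤ n} [n, j]_q q^{j(j+1)/2} ∏_{k<j} (a + b q^k) ∏_{j ≤ k < n} (1 - b q^{k+1}) = (-aq;q)_n`,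
proved by induction on `n` for all `b` at once: the q-Pascal rule writes the sum at level `n + 1`
as `(1 - b q^{n+1})` times the sum at level `n` plus `q^{n+1} (a + b)` times the sum at level `n`
with `b` replaced by `bq`. Dividing by `(q;q)_n (bq;q)_n` and using
`[n, j]_q = (q;q)_n / ((q;q)_j (q;q)_{n-j})` turns this into
`∑_{j ≤ n} u_j / (q;q)_{n-j} = (-aq;q)_n / ((q;q)_n (bq;q)_n)` for the terms `u_j` of the series.
The `u_j` are absolutely summable by the ratio test, so letting `n → ∞` (Tannery's theorem) gives
`(∑ u_j) / (q;q)_∞ = (-aq;q)_∞ / ((q;q)_∞ (bq;q)_∞)`.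
-/

open Finset Filter Topology

section QBinomial

variable {R : Type*} [CommRing R] (q : R)

noncomputable def qBinomial : ℕ → ℕ → R
  | _, 0 => 1
  | 0, _ + 1 => 0
  | n + 1, j + 1 => qBinomial n (j + 1) + q ^ (n - j) * qBinomial n j

@[simp]
lemma qBinomial_zero_right (n : ℕ) : qBinomial q n 0 = 1 := by
  cases n <;> rfl

lemma qBinomial_succ_succ (n j : ℕ) :
    qBinomial q (n + 1) (j + 1) = qBinomial q n (j + 1) + q ^ (n - j) * qBinomial q n j :=
  rfl

lemma qBinomial_eq_zero_of_lt {n j : ℕ} (h : n < j) : qBinomial q n j = 0 := by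
  induction n generalizing j with
  | zero => obtain ⟨j, rfl⟩ := Nat.exists_eq_add_of_lt h; rfl
  | succ n ih =>
    obtain ⟨j, rfl⟩ : ∃ i, j = i + 1 := Nat.exists_eq_succ_of_ne_zero (by omega)
    rw [qBinomial_succ_succ, ih (by omega), ih (by omega), mul_zero, add_zero]

@[simp]
lemma qBinomial_self (n : ℕ) : qBinomial q n n = 1 := by
  induction n with
  | zero => rfl
  | succ n ih => simp [qBinomial_succ_succ, qBinomial_eq_zero_of_lt, ih]

lemma qBinomial_mul_prod_mul_prod {n j : ℕ} (h : j ≤ n) :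
    qBinomial q n j * (∏ k ∈ range j, (1 - q ^ (k + 1))) * ∏ k ∈ range (n - j), (1 - q ^ (k + 1))
      = ∏ k ∈ range n, (1 - q ^ (k + 1)) := by
  induction n generalizing j with
  | zero =>
    obtain rfl : j = 0 := by omega
    simp
  | succ n ih =>
    cases j with
    | zero => simp
    | succ j =>
      obtain hjn | rfl := (Nat.le_of_lt_succ h).lt_or_eq
      · have hnj : n - j = n - (j + 1) + 1 := by omega
        have ih₁ := ih hjn
        have ih₂ := ih hjn.le
        rw [prod_range_succ] at ih₁
        rw [hnj, prod_range_succ] at ih₂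
        rw [qBinomial_succ_succ, Nat.add_sub_add_right, hnj, prod_range_succ, prod_range_succ,
          prod_range_succ]
        have hpow : q ^ (n - (j + 1) + 1) * q ^ (j + 1) = q ^ (n + 1) := by
          rw [← pow_add]; congr 1; omega
        linear_combination (1 - q ^ (n - (j + 1) + 1)) * ih₁
          + q ^ (n - (j + 1) + 1) * (1 - q ^ (j + 1)) * ih₂
          - (∏ k ∈ range n, (1 - q ^ (k + 1))) * hpow
      · simp

lemma sum_range_qBinomial_succ_mul (f : ℕ → R) (n : ℕ) :
    ∑ j ∈ range (n + 2), qBinomial q (n + 1) j * f j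
      = ∑ j ∈ range (n + 1), qBinomial q n j * f j
        + ∑ j ∈ range (n + 1), q ^ (n - j) * qBinomial q n j * f (j + 1) := by
  have hn : ∑ j ∈ range (n + 1), qBinomial q n j * f j
      = ∑ j ∈ range (n + 2), qBinomial q n j * f j := by
    rw [sum_range_succ _ (n + 1), qBinomial_eq_zero_of_lt q n.lt_succ_self, zero_mul, add_zero]
  rw [hn, sum_range_succ' _ (n + 1), sum_range_succ' (fun j ↦ qBinomial q n j * f j)]
  simp only [qBinomial_succ_succ, add_mul, sum_add_distrib, qBinomial_zero_right]
  ring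

lemma prod_one_add_mul_pow_eq_sum_qBinomial (a b : R) (n : ℕ) :
    ∏ k ∈ range n, (1 + a * q ^ (k + 1)) = ∑ j ∈ range (n + 1), qBinomial q n j *
      (q ^ (j * (j + 1) / 2) * (∏ k ∈ range j, (a + b * q ^ k)) *
        ∏ k ∈ Ico j n, (1 - b * q ^ (k + 1))) := by
  induction n generalizing b with
  | zero => simp
  | succ n ih =>
    have hlast : ∀ j ∈ range (n + 1), qBinomial q n j * (q ^ (j * (j + 1) / 2) *
        (∏ k ∈ range j, (a + b * q ^ k)) * ∏ k ∈ Ico j (n + 1), (1 - b * q ^ (k + 1)))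
        = (1 - b * q ^ (n + 1)) * (qBinomial q n j * (q ^ (j * (j + 1) / 2) *
          (∏ k ∈ range j, (a + b * q ^ k)) * ∏ k ∈ Ico j n, (1 - b * q ^ (k + 1)))) := by
      intro j hj
      rw [prod_Ico_succ_top (Nat.le_of_lt_succ (mem_range.mp hj))]
      ring
    have hshift : ∀ j ∈ range (n + 1), q ^ (n - j) * qBinomial q n j *
        (q ^ ((j + 1) * (j + 1 + 1) / 2) * (∏ k ∈ range (j + 1), (a + b * q ^ k)) *
          ∏ k ∈ Ico (j + 1) (n + 1), (1 - b * q ^ (k + 1)))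
        = q ^ (n + 1) * (a + b) * (qBinomial q n j * (q ^ (j * (j + 1) / 2) *
          (∏ k ∈ range j, (a + b * q * q ^ k)) * ∏ k ∈ Ico j n, (1 - b * q * q ^ (k + 1)))) := by
      intro j hj
      have hpow : q ^ (n - j) * q ^ ((j + 1) * (j + 1 + 1) / 2)
          = q ^ (n + 1) * q ^ (j * (j + 1) / 2) := by
        rw [← pow_add, ← pow_add]
        congr 1
        have := Nat.le_of_lt_succ (mem_range.mp hj)
        have : (j + 1) * (j + 1 + 1) = j * (j + 1) + 2 * (j + 1) := by ring
        omega
      have hP : ∏ k ∈ range (j + 1), (a + b * q ^ k)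
          = (a + b) * ∏ k ∈ range j, (a + b * q * q ^ k) := by
        rw [prod_range_succ', mul_comm]
        simp only [pow_succ, pow_zero, mul_one, mul_comm q, mul_assoc]
      have hI : ∏ k ∈ Ico (j + 1) (n + 1), (1 - b * q ^ (k + 1))
          = ∏ k ∈ Ico j n, (1 - b * q * q ^ (k + 1)) := by
        rw [← prod_Ico_add']
        simp only [pow_succ, mul_assoc, mul_comm q]
      rw [hP, hI]
      linear_combination (qBinomial q n j * (a + b) * (∏ k ∈ range j, (a + b * q * q ^ k)) *
        ∏ k ∈ Ico j n, (1 - b * q * q ^ (k + 1))) * hpow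
    rw [sum_range_qBinomial_succ_mul, sum_congr rfl hlast, sum_congr rfl hshift, ← mul_sum,
      ← mul_sum, ← ih, ← ih, prod_range_succ]
    ring

end QBinomial

lemma tendsto_sum_range_mul_sub {R : Type*} [NormedRing R] [CompleteSpace R] {u v : ℕ → R}
    {V : R} (hu : Summable (‖u ·‖)) (hv : Tendsto v atTop (𝓝 V)) :
    Tendsto (fun n ↦ ∑ j ∈ range (n + 1), u j * v (n - j)) atTop (𝓝 ((∑' j, u j) * V)) := by
  obtain ⟨C, hC⟩ := hv.norm.bddAbove_range
  have hvC (n : ℕ) : ‖v n‖ ≤ C := hC (Set.mem_range_self n)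
  let F (n j : ℕ) : R := if j ≤ n then u j * v (n - j) else 0
  have hF (n : ℕ) : ∑' j, F n j = ∑ j ∈ range (n + 1), u j * v (n - j) := by
    rw [tsum_eq_sum (s := range (n + 1)) fun j hj ↦ if_neg (by simpa [Nat.lt_succ_iff] using hj)]
    exact sum_congr rfl fun j hj ↦ if_pos (Nat.le_of_lt_succ (mem_range.mp hj))
  have hlim (j : ℕ) : Tendsto (F · j) atTop (𝓝 (u j * V)) := by
    refine ((hv.comp (tendsto_sub_atTop_nat j)).const_mul (u j)).congr' ?_
    filter_upwards [eventually_ge_atTop j] with n hn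
    simp [F, hn]
  have hbound (n j : ℕ) : ‖F n j‖ ≤ ‖u j‖ * C := by
    by_cases hjn : j ≤ n
    · simpa [F, hjn] using norm_mul_le_of_le le_rfl (hvC (n - j))
    · simpa [F, hjn] using mul_nonneg (norm_nonneg (u j)) ((norm_nonneg _).trans (hvC 0))
  rw [← hu.of_norm.tsum_mul_right]
  simpa only [hF] using tendsto_tsum_of_dominated_convergence (hu.mul_right C) hlim
    (.of_forall hbound)

lemma summable_norm_of_succ_eq_mul {R : Type*} [SeminormedRing R] {u w : ℕ → R}
    (hrec : ∀ n, u (n + 1) = u n * w n) (hw : Tendsto w atTop (𝓝 0)) : Summable (‖u ·‖) := by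
  refine summable_of_ratio_norm_eventually_le (r := 1 / 2) (by norm_num) ?_
  filter_upwards [hw.norm.eventually_lt_const (by norm_num : ‖(0 : R)‖ < 1 / 2)] with n hn
  rw [norm_norm, norm_norm, hrec, mul_comm (1 / 2)]
  exact norm_mul_le_of_le le_rfl hn.le

section Field

variable {K : Type*} [Field K] (q a b : K)

noncomputable def cauchyTerm (j : ℕ) : K :=
  (∏ k ∈ range j, (a + b * q ^ k)) * q ^ (j * (j + 1) / 2) /
    ((∏ k ∈ range j, (1 - q ^ (k + 1))) * ∏ k ∈ range j, (1 - b * q ^ (k + 1)))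

lemma cauchyTerm_succ (j : ℕ) :
    cauchyTerm q a b (j + 1) = cauchyTerm q a b j *
      ((a + b * q ^ j) * q ^ (j + 1) / ((1 - q ^ (j + 1)) * (1 - b * q ^ (j + 1)))) := by
  have hT : (j + 1) * (j + 1 + 1) / 2 = j * (j + 1) / 2 + (j + 1) := by
    have : (j + 1) * (j + 1 + 1) = j * (j + 1) + 2 * (j + 1) := by ring
    omega
  rw [cauchyTerm, cauchyTerm, div_mul_div_comm, prod_range_succ, prod_range_succ,
    prod_range_succ, hT, pow_add]
  congr 1 <;> ring

lemma sum_range_cauchyTerm_mul_inv (hQ : ∀ k, 1 - q ^ (k + 1) ≠ 0)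
    (hR : ∀ k, 1 - b * q ^ (k + 1) ≠ 0) (n : ℕ) :
    ∑ j ∈ range (n + 1), cauchyTerm q a b j * (∏ k ∈ range (n - j), (1 - q ^ (k + 1)))⁻¹
      = (∏ k ∈ range n, (1 + a * q ^ (k + 1))) /
        ((∏ k ∈ range n, (1 - q ^ (k + 1))) * ∏ k ∈ range n, (1 - b * q ^ (k + 1))) := by
  have hQn (m : ℕ) : ∏ k ∈ range m, (1 - q ^ (k + 1)) ≠ 0 := prod_ne_zero_iff.mpr fun k _ ↦ hQ k
  have hRn (m : ℕ) : ∏ k ∈ range m, (1 - b * q ^ (k + 1)) ≠ 0 :=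
    prod_ne_zero_iff.mpr fun k _ ↦ hR k
  rw [eq_div_iff (mul_ne_zero (hQn n) (hRn n)), sum_mul,
    prod_one_add_mul_pow_eq_sum_qBinomial q a b n]
  refine sum_congr rfl fun j hj ↦ ?_
  have hjn := Nat.le_of_lt_succ (mem_range.mp hj)
  rw [← qBinomial_mul_prod_mul_prod q hjn, ← prod_range_mul_prod_Ico _ hjn, cauchyTerm]
  field_simp [hQn j, hQn (n - j), hRn j]

end Field

section NormedField

variable {𝕜 : Type*} [NormedField 𝕜] {q : 𝕜}

lemma summable_norm_mul_pow_succ (c : 𝕜) (hq : ‖q‖ < 1) :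
    Summable fun k : ℕ ↦ ‖c * q ^ (k + 1)‖ := by
  simpa [norm_mul, norm_pow] using ((summable_nat_add_iff 1).mpr
    (summable_geometric_of_lt_one (norm_nonneg q) hq)).mul_left ‖c‖

lemma tendsto_prod_range_one_sub_mul_pow [CompleteSpace 𝕜] (c : 𝕜) (hq : ‖q‖ < 1) :
    Tendsto (fun n ↦ ∏ k ∈ range n, (1 - c * q ^ (k + 1))) atTop
      (𝓝 (∏' k, (1 - c * q ^ (k + 1)))) := by
  simp_rw [sub_eq_add_neg]
  exact (multipliable_one_add_of_summable (by simpa using summable_norm_mul_pow_succ c hq))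
    |>.hasProd.tendsto_prod_nat

lemma tprod_one_sub_mul_pow_ne_zero [CompleteSpace 𝕜] (c : 𝕜) (hq : ‖q‖ < 1)
    (hc : ∀ k, 1 - c * q ^ (k + 1) ≠ 0) :
    ∏' k, (1 - c * q ^ (k + 1)) ≠ 0 := by
  simp_rw [sub_eq_add_neg] at hc ⊢
  exact tprod_one_add_ne_zero_of_summable hc (by simpa using summable_norm_mul_pow_succ c hq)

lemma one_sub_pow_succ_ne_zero (hq : ‖q‖ < 1) (k : ℕ) : 1 - q ^ (k + 1) ≠ 0 := by
  refine sub_ne_zero.mpr fun h ↦ (pow_lt_one₀ (norm_nonneg q) hq k.succ_ne_zero).ne ?_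
  rw [← norm_pow, ← h, norm_one]

lemma summable_norm_cauchyTerm (a b : 𝕜) (hq : ‖q‖ < 1) :
    Summable (‖cauchyTerm q a b ·‖) := by
  refine summable_norm_of_succ_eq_mul (cauchyTerm_succ q a b) ?_
  have hq₀ : Tendsto (q ^ ·) atTop (𝓝 (0 : 𝕜)) := tendsto_pow_atTop_nhds_zero_of_norm_lt_one hq
  have hq₁ : Tendsto (fun j : ℕ ↦ q ^ (j + 1)) atTop (𝓝 0) := hq₀.comp (tendsto_add_atTop_nat 1)
  simpa [Pi.div_def] using ((tendsto_const_nhds.add (hq₀.const_mul b)).mul hq₁).div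
    ((tendsto_const_nhds.sub hq₁).mul (tendsto_const_nhds.sub (hq₁.const_mul b)))
    (by simp : (1 - 0 : 𝕜) * (1 - b * 0) ≠ 0)

end NormedField

/-- Cauchy/Ramanujan identity: for `|q| < 1` and `b q^n ≠ 1` for `n ≥ 1`,
`Σ_j (-b/a;q)_j a^j q^{j(j+1)/2} / ((q;q)_j (bq;q)_j) = (-aq;q)_∞ / (bq;q)_∞`,
with `a^j (-b/a;q)_j` interpreted as `∏_{k<j} (a + b q^k)`. -/
theorem stmt1 (q a b : ℂ) (hq : ‖q‖ < 1) (hb : ∀ n : ℕ, 1 ≤ n → b * q ^ n ≠ 1) :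
    (∑' j : ℕ, (∏ k ∈ range j, (a + b * q ^ k)) * q ^ (j * (j + 1) / 2) /
        ((∏ k ∈ range j, (1 - q ^ (k + 1))) * ∏ k ∈ range j, (1 - b * q ^ (k + 1))))
    = (∏' k : ℕ, (1 + a * q ^ (k + 1))) / ∏' k : ℕ, (1 - b * q ^ (k + 1)) := by
  have hQ := one_sub_pow_succ_ne_zero hq
  have hR (k : ℕ) : 1 - b * q ^ (k + 1) ≠ 0 := sub_ne_zero.mpr (hb (k + 1) k.succ_pos).symm
  have hQ₀ : ∏' k : ℕ, (1 - q ^ (k + 1)) ≠ 0 := by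
    simpa using tprod_one_sub_mul_pow_ne_zero 1 hq (by simpa using hQ)
  have hR₀ := tprod_one_sub_mul_pow_ne_zero b hq hR
  have hAlim : Tendsto (fun n ↦ ∏ k ∈ range n, (1 + a * q ^ (k + 1))) atTop
      (𝓝 (∏' k : ℕ, (1 + a * q ^ (k + 1)))) := by
    simpa using tendsto_prod_range_one_sub_mul_pow (-a) hq
  have hQlim : Tendsto (fun n ↦ ∏ k ∈ range n, (1 - q ^ (k + 1))) atTop
      (𝓝 (∏' k : ℕ, (1 - q ^ (k + 1)))) := by
    simpa using tendsto_prod_range_one_sub_mul_pow 1 hq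
  have hconv := tendsto_sum_range_mul_sub (summable_norm_cauchyTerm a b hq) (hQlim.inv₀ hQ₀)
  simp_rw [sum_range_cauchyTerm_mul_inv q a b hQ hR] at hconv
  have hlim := tendsto_nhds_unique hconv
    (hAlim.div (hQlim.mul (tendsto_prod_range_one_sub_mul_pow b hq)) (mul_ne_zero hQ₀ hR₀))
  change ∑' j, cauchyTerm q a b j = _
  field_simp at hlim ⊢
  linear_combination hlim
end

section
/- For |q|<1 and z ≠ 0, (-qz;q²)_∞ (-q/z;q²)_∞ (q²;q²)_∞ = Σ_{n=-∞}^{∞} z^n q^{n²} (Jacobi triple product identity). -/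
/-!
Cauchy's proof. Substituting `Q = q²`, `x = zq`, `y = q^{2m}` in the `Q`-binomial theorem
`∏_{j<N} (y + x Q^j) = ∑_k [N choose k]_Q Q^{k(k-1)/2} x^k y^{N-k}` with `N = 2m` gives the finite
identity `(-qz;q²)_m (-q/z;q²)_m = ∑_{|n| ≤ m} [2m choose m+n]_{q²} z^n q^{n²}`.
Since `[k+j choose k]_Q = (Q;Q)_{k+j} / ((Q;Q)_k (Q;Q)_j)` and `(Q;Q)_n → (Q;Q)_∞ ≠ 0`, the
coefficients are uniformly bounded and tend to `1/(q²;q²)_∞` as `m → ∞`, so by dominated convergence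
(Tannery's theorem) the finite identity passes to the limit.
-/

open Finset Filter Topology

variable {R : Type*}

def gaussianBinomial [Semiring R] (Q : R) : ℕ → ℕ → R
  | _, 0 => 1
  | 0, _ + 1 => 0
  | N + 1, k + 1 => gaussianBinomial Q N k + Q ^ (k + 1) * gaussianBinomial Q N (k + 1)

namespace gaussianBinomial

variable [Semiring R] (Q : R)

@[simp] lemma zero_right (N : ℕ) : gaussianBinomial Q N 0 = 1 := by cases N <;> rfl

lemma succ_succ (N k : ℕ) : gaussianBinomial Q (N + 1) (k + 1) =
    gaussianBinomial Q N k + Q ^ (k + 1) * gaussianBinomial Q N (k + 1) := rfl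

lemma eq_zero_of_lt : ∀ {N k : ℕ}, N < k → gaussianBinomial Q N k = 0
  | 0, _ + 1, _ => rfl
  | N + 1, k + 1, h => by
    rw [succ_succ, eq_zero_of_lt (by omega), eq_zero_of_lt (by omega), mul_zero, add_zero]

@[simp] lemma self : ∀ N : ℕ, gaussianBinomial Q N N = 1
  | 0 => rfl
  | N + 1 => by rw [succ_succ, self N, eq_zero_of_lt Q N.lt_succ_self, mul_zero, add_zero]

end gaussianBinomial

open gaussianBinomial

lemma Nat.choose_two_succ (k : ℕ) : (k + 1).choose 2 = k.choose 2 + k := by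
  simp [Nat.choose_succ_succ, add_comm]

lemma Nat.two_mul_choose_two_add_self (k : ℕ) : 2 * k.choose 2 + k = k * k := by
  induction k with
  | zero => rfl
  | succ k ih => rw [Nat.choose_two_succ]; linear_combination ih

theorem prod_add_mul_pow_eq_sum_gaussianBinomial [CommSemiring R] (Q x y : R) (N : ℕ) :
    ∏ j ∈ range N, (y + x * Q ^ j) =
      ∑ k ∈ range (N + 1), gaussianBinomial Q N k * Q ^ k.choose 2 * x ^ k * y ^ (N - k) := by
  induction N generalizing x with
  | zero => simp
  | succ N ih =>
    -- `∏_{j ≤ N} (y + x Q^j) = (y + x) ∏_{j < N} (y + (x Q) Q^j)`; its `y`- and `x`-parts give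
    -- the two terms of the `Q`-Pascal rule.
    set S :=
      ∑ k ∈ range (N + 1), gaussianBinomial Q N k * Q ^ k.choose 2 * (x * Q) ^ k * y ^ (N - k)
    have hx : x * S = ∑ k ∈ range (N + 1),
        gaussianBinomial Q N k * Q ^ (k + 1).choose 2 * x ^ (k + 1) * y ^ (N + 1 - (k + 1)) := by
      rw [mul_sum]
      refine sum_congr rfl fun k _ => ?_
      rw [Nat.choose_two_succ, Nat.add_sub_add_right]
      ring
    have hy : y * S = ∑ k ∈ range (N + 1), Q ^ (k + 1) * gaussianBinomial Q N (k + 1) *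
        Q ^ (k + 1).choose 2 * x ^ (k + 1) * y ^ (N + 1 - (k + 1)) + y ^ (N + 1) := by
      rw [mul_sum, sum_range_succ', sum_range_succ, eq_zero_of_lt Q N.lt_succ_self]
      simp only [zero_right, Nat.choose_zero_succ, pow_zero, mul_zero, zero_mul, add_zero, mul_one,
        Nat.sub_zero, Nat.add_sub_add_right]
      congr 1
      · refine sum_congr rfl fun k hk => ?_
        obtain ⟨i, rfl⟩ : ∃ i, N = k + 1 + i := ⟨N - (k + 1), by grind⟩
        rw [show k + 1 + i - k = i + 1 by omega, Nat.choose_two_succ, Nat.add_sub_cancel_left]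
        ring
      · ring
    calc ∏ j ∈ range (N + 1), (y + x * Q ^ j) = y * S + x * S := by
          have hS : S = ∏ j ∈ range N, (y + x * Q ^ (j + 1)) := by
            simp only [S, ← ih, pow_succ, mul_assoc, mul_comm Q]
          rw [prod_range_succ', ← hS, pow_zero, mul_one]
          ring
      _ = _ := by
          rw [hx, hy, sum_range_succ' _ (N + 1)]
          simp only [succ_succ, add_mul, sum_add_distrib, zero_right, Nat.choose_zero_succ,
            pow_zero, mul_one, Nat.sub_zero, Nat.add_sub_add_right]
          ring

/-- The `q`-Pochhammer symbol `(Q;Q)_n`. -/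
def qPochhammer [CommRing R] (Q : R) (n : ℕ) : R := ∏ j ∈ range n, (1 - Q ^ (j + 1))

lemma qPochhammer_succ [CommRing R] (Q : R) (n : ℕ) :
    qPochhammer Q (n + 1) = qPochhammer Q n * (1 - Q ^ (n + 1)) :=
  prod_range_succ _ _

theorem qPochhammer_mul_qPochhammer_mul_gaussianBinomial [CommRing R] (Q : R) (j k : ℕ) :
    qPochhammer Q k * qPochhammer Q j * gaussianBinomial Q (k + j) k = qPochhammer Q (k + j) := by
  induction j generalizing k with
  | zero => simp [qPochhammer]
  | succ j ihj =>
    induction k with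
    | zero => simp [qPochhammer]
    | succ k ihk =>
      have h := ihj (k + 1)
      rw [show k + 1 + j = k + (j + 1) by ring, qPochhammer_succ Q k] at h
      rw [qPochhammer_succ Q j] at ihk
      rw [show k + 1 + (j + 1) = k + (j + 1) + 1 by ring, succ_succ, qPochhammer_succ Q k,
        qPochhammer_succ Q j, qPochhammer_succ Q (k + (j + 1))]
      linear_combination (1 - Q ^ (k + 1)) * ihk + Q ^ (k + 1) * (1 - Q ^ (j + 1)) * h

section FiniteIdentity

variable {K : Type*} [Field K] {q z : K}

lemma prod_range_two_mul_pow_add_mul (hz : z ≠ 0) (m : ℕ) :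
    ∏ j ∈ range (2 * m), (q ^ (2 * m) + z * q * (q ^ 2) ^ j) =
      z ^ m * q ^ (3 * m * m) * ((∏ k ∈ range m, (1 + q * z * q ^ (2 * k))) *
        ∏ k ∈ range m, (1 + q / z * q ^ (2 * k))) := by
  have hlow : ∏ j ∈ range m, (q ^ (2 * m) + z * q * (q ^ 2) ^ j) =
      z ^ m * q ^ (m * m) * ∏ k ∈ range m, (1 + q / z * q ^ (2 * k)) := by
    have hodd (n : ℕ) : ∏ j ∈ range n, z * q ^ (2 * j + 1) = z ^ n * q ^ (n * n) := by
      induction n with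
      | zero => simp
      | succ n ih => rw [prod_range_succ, ih]; ring
    -- the `j`-th factor is `z q^{2j+1} (1 + (q / z) q^{2(m-1-j)})`
    rw [← hodd, ← prod_range_reflect (fun k => 1 + q / z * q ^ (2 * k)), ← prod_mul_distrib]
    refine prod_congr rfl fun j hj => ?_
    obtain ⟨i, rfl⟩ : ∃ i, m = j + 1 + i := ⟨m - (j + 1), by grind⟩
    rw [show j + 1 + i - 1 - j = i by omega]
    field_simp
    ring
  have hhigh : ∏ j ∈ range m, (q ^ (2 * m) + z * q * (q ^ 2) ^ (m + j)) =
      q ^ (2 * m * m) * ∏ k ∈ range m, (1 + q * z * q ^ (2 * k)) := by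
    rw [pow_mul q (2 * m) m, pow_eq_prod_const (q ^ (2 * m)) m, ← prod_mul_distrib]
    exact prod_congr rfl fun k _ => by ring
  rw [two_mul m, prod_range_add, ← two_mul, hlow, hhigh]
  ring

theorem jacobi_triple_product_finite (hq : q ≠ 0) (hz : z ≠ 0) (m : ℕ) :
    (∏ k ∈ range m, (1 + q * z * q ^ (2 * k))) * (∏ k ∈ range m, (1 + q / z * q ^ (2 * k))) =
      ∑ n ∈ Icc (-(m : ℤ)) m,
        gaussianBinomial (q ^ 2) (2 * m) (m + n).toNat * (z ^ n * q ^ (n ^ 2)) := by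
  have hterm (n : ℤ) (hn : n ∈ Icc (-(m : ℤ)) m) :
      z ^ m * q ^ (3 * m * m) *
          (gaussianBinomial (q ^ 2) (2 * m) (m + n).toNat * (z ^ n * q ^ (n ^ 2)))
        = gaussianBinomial (q ^ 2) (2 * m) (m + n).toNat * ((q ^ 2) ^ (m + n).toNat.choose 2 *
          (z * q) ^ (m + n).toNat * (q ^ (2 * m)) ^ (2 * m - (m + n).toNat)) := by
    rw [mem_Icc] at hn
    set k := (m + n).toNat
    have hk : (k : ℤ) = m + n := Int.toNat_of_nonneg (by omega)
    have hk2 : k ≤ 2 * m := by omega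
    have hexp : ((3 * m * m : ℕ) : ℤ) + n ^ 2 =
        ((2 * k.choose 2 + k + 2 * m * (2 * m - k) : ℕ) : ℤ) := by
      have h := Nat.two_mul_choose_two_add_self k
      zify [hk2] at h ⊢
      rw [hk] at h ⊢
      linear_combination -h
    rw [mul_left_comm]
    congr 1
    calc z ^ m * q ^ (3 * m * m) * (z ^ n * q ^ (n ^ 2))
        = z ^ ((m : ℤ) + n) * q ^ (((3 * m * m : ℕ) : ℤ) + n ^ 2) := by
          rw [zpow_add₀ hz, zpow_add₀ hq, zpow_natCast, zpow_natCast]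
          ring
      _ = _ := by
          rw [hexp, ← hk, zpow_natCast, zpow_natCast]
          ring
  apply mul_left_cancel₀ (mul_ne_zero (pow_ne_zero m hz) (pow_ne_zero (3 * m * m) hq))
  rw [← prod_range_two_mul_pow_add_mul hz, prod_add_mul_pow_eq_sum_gaussianBinomial, mul_sum,
    sum_congr rfl hterm]
  refine sum_nbij' (fun k => (k : ℤ) - m) (fun n => (m + n).toNat) ?_ ?_ ?_ ?_ ?_ <;>
    intros <;> simp_all [mul_assoc] <;> omega

end FiniteIdentity

section Analytic

variable {𝕜 : Type*} [NormedField 𝕜] {Q : 𝕜}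

lemma summable_norm_neg_pow_succ (hQ : ‖Q‖ < 1) : Summable fun j : ℕ => ‖-Q ^ (j + 1)‖ := by
  simpa [norm_pow, pow_succ] using (summable_geometric_of_lt_one (norm_nonneg Q) hQ).mul_right ‖Q‖

lemma one_sub_pow_succ_ne_zero_s4 (hQ : ‖Q‖ < 1) (j : ℕ) : 1 - Q ^ (j + 1) ≠ 0 := by
  refine sub_ne_zero.mpr fun h => ?_
  have h_norm := congrArg norm h
  rw [norm_one, norm_pow] at h_norm
  exact (pow_lt_one₀ (norm_nonneg Q) hQ j.succ_ne_zero).ne' h_norm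

lemma qPochhammer_ne_zero (hQ : ‖Q‖ < 1) (n : ℕ) : qPochhammer Q n ≠ 0 :=
  prod_ne_zero_iff.mpr fun j _ => one_sub_pow_succ_ne_zero_s4 hQ j

lemma gaussianBinomial_add_eq_div (hQ : ‖Q‖ < 1) (k j : ℕ) :
    gaussianBinomial Q (k + j) k = qPochhammer Q (k + j) / (qPochhammer Q k * qPochhammer Q j) := by
  rw [eq_div_iff (mul_ne_zero (qPochhammer_ne_zero hQ k) (qPochhammer_ne_zero hQ j)), mul_comm,
    qPochhammer_mul_qPochhammer_mul_gaussianBinomial]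

variable [CompleteSpace 𝕜]

lemma tprod_one_sub_pow_succ_ne_zero (hQ : ‖Q‖ < 1) : ∏' j : ℕ, (1 - Q ^ (j + 1)) ≠ 0 := by
  have h := tprod_one_add_ne_zero_of_summable (f := fun j => -Q ^ (j + 1))
    (by simpa only [← sub_eq_add_neg] using one_sub_pow_succ_ne_zero_s4 hQ)
    (summable_norm_neg_pow_succ hQ)
  simpa only [← sub_eq_add_neg] using h

lemma tendsto_qPochhammer (hQ : ‖Q‖ < 1) :
    Tendsto (qPochhammer Q) atTop (𝓝 (∏' j : ℕ, (1 - Q ^ (j + 1)))) := by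
  have h := (multipliable_one_add_of_summable (f := fun j => -Q ^ (j + 1))
    (summable_norm_neg_pow_succ hQ)).hasProd.tendsto_prod_nat
  simp only [← sub_eq_add_neg] at h
  exact h

lemma exists_norm_gaussianBinomial_le (hQ : ‖Q‖ < 1) :
    ∃ C, ∀ N k, ‖gaussianBinomial Q N k‖ ≤ C := by
  have hP := tendsto_qPochhammer hQ
  obtain ⟨B, hB⟩ := isBounded_iff_forall_norm_le.mp (Metric.isBounded_range_of_tendsto _ hP)
  obtain ⟨B', hB'⟩ := isBounded_iff_forall_norm_le.mp
    (Metric.isBounded_range_of_tendsto _ (hP.inv₀ (tprod_one_sub_pow_succ_ne_zero hQ)))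
  have hB_nonneg : 0 ≤ B := (norm_nonneg _).trans (hB _ ⟨0, rfl⟩)
  have hB'_nonneg : 0 ≤ B' := (norm_nonneg _).trans (hB' _ ⟨0, rfl⟩)
  refine ⟨B * B' * B', fun N k => ?_⟩
  rcases lt_or_ge N k with hNk | hkN
  · rw [eq_zero_of_lt Q hNk, norm_zero]
    positivity
  obtain ⟨j, rfl⟩ := Nat.exists_eq_add_of_le hkN
  rw [gaussianBinomial_add_eq_div hQ, div_eq_mul_inv, mul_inv, ← mul_assoc, norm_mul, norm_mul]
  gcongr
  exacts [hB _ ⟨_, rfl⟩, hB' _ ⟨k, rfl⟩, hB' _ ⟨j, rfl⟩]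

lemma tendsto_gaussianBinomial (hQ : ‖Q‖ < 1) :
    Tendsto (fun p : ℕ × ℕ => gaussianBinomial Q (p.1 + p.2) p.1) (atTop ×ˢ atTop)
      (𝓝 (∏' j : ℕ, (1 - Q ^ (j + 1)))⁻¹) := by
  have hP := tendsto_qPochhammer hQ
  have hP0 := tprod_one_sub_pow_succ_ne_zero hQ
  have hsum : Tendsto (fun p : ℕ × ℕ => p.1 + p.2) (atTop ×ˢ atTop) atTop :=
    tendsto_atTop_mono (fun p => Nat.le_add_right _ _) tendsto_fst
  have h := (hP.comp hsum).div ((hP.comp tendsto_fst).mul (hP.comp tendsto_snd))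
    (mul_ne_zero hP0 hP0)
  rw [div_mul_cancel_left₀ hP0] at h
  exact h.congr fun p => (gaussianBinomial_add_eq_div hQ p.1 p.2).symm

lemma tendsto_gaussianBinomial_two_mul (hQ : ‖Q‖ < 1) (n : ℤ) :
    Tendsto (fun m : ℕ => gaussianBinomial Q (2 * m) (m + n).toNat) atTop
      (𝓝 (∏' j : ℕ, (1 - Q ^ (j + 1)))⁻¹) := by
  have h_toNat (c : ℤ) : Tendsto (fun m : ℕ => (m + c).toNat) atTop atTop :=
    tendsto_atTop_atTop.mpr fun b => ⟨b + c.natAbs, fun a ha => by omega⟩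
  refine ((tendsto_gaussianBinomial hQ).comp ((h_toNat n).prodMk (h_toNat (-n)))).congr' ?_
  filter_upwards [eventually_ge_atTop n.natAbs] with m hm
  simp only [Function.comp_apply]
  congr 1
  omega

end Analytic

section Summability

variable {𝕜 : Type*} [NormedField 𝕜]

lemma tendsto_prod_one_add_mul_pow_two_mul [CompleteSpace 𝕜] (c : 𝕜) {q : 𝕜} (hq : ‖q‖ < 1) :
    Tendsto (fun m => ∏ k ∈ range m, (1 + c * q ^ (2 * k))) atTop
      (𝓝 (∏' k : ℕ, (1 + c * q ^ (2 * k)))) := by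
  have hq2 : ‖q‖ ^ 2 < 1 := pow_lt_one₀ (norm_nonneg q) hq two_ne_zero
  refine (multipliable_one_add_of_summable ?_).hasProd.tendsto_prod_nat
  simpa [norm_mul, norm_pow, pow_mul] using
    (summable_geometric_of_lt_one (by positivity) hq2).mul_left ‖c‖

lemma summable_pow_mul_pow_sq {c r : ℝ} (hc : 0 ≤ c) (hr0 : 0 ≤ r) (hr : r < 1) :
    Summable fun n : ℕ => c ^ n * r ^ (n ^ 2) := by
  have hsmall : ∀ᶠ n : ℕ in atTop, c * r ^ n ≤ 1 / 2 := by
    have h := (tendsto_pow_atTop_nhds_zero_of_lt_one hr0 hr).const_mul c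
    rw [mul_zero] at h
    exact h.eventually (ge_mem_nhds (by norm_num))
  refine summable_geometric_two.of_norm_bounded_eventually_nat ?_
  filter_upwards [hsmall] with n hn
  rw [Real.norm_of_nonneg (by positivity), sq, pow_mul, ← mul_pow]
  exact pow_le_pow_left₀ (by positivity) hn n

lemma summable_norm_zpow_mul_zpow_sq (z : 𝕜) {q : 𝕜} (hq : ‖q‖ < 1) :
    Summable fun n : ℤ => ‖z ^ n * q ^ (n ^ 2)‖ := by
  apply Summable.of_nat_of_neg
  · refine (summable_pow_mul_pow_sq (norm_nonneg z) (norm_nonneg q) hq).congr fun n => ?_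
    rw [← Nat.cast_pow, zpow_natCast, zpow_natCast, norm_mul, norm_pow, norm_pow]
  · refine (summable_pow_mul_pow_sq (inv_nonneg.mpr (norm_nonneg z)) (norm_nonneg q) hq).congr
      fun n => ?_
    rw [neg_sq, ← Nat.cast_pow, zpow_neg, zpow_natCast, zpow_natCast, norm_mul, norm_inv, norm_pow,
      norm_pow, inv_pow]

end Summability

theorem tendsto_jacobi_triple_product_finite {𝕜 : Type*} [NormedField 𝕜] [CompleteSpace 𝕜]
    {q z : 𝕜} (hq : ‖q‖ < 1) (hq0 : q ≠ 0) (hz : z ≠ 0) :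
    Tendsto (fun m : ℕ =>
        (∏ k ∈ range m, (1 + q * z * q ^ (2 * k))) * ∏ k ∈ range m, (1 + q / z * q ^ (2 * k)))
      atTop (𝓝 ((∏' j : ℕ, (1 - (q ^ 2) ^ (j + 1)))⁻¹ * ∑' n : ℤ, z ^ n * q ^ (n ^ 2))) := by
  have hQ : ‖q ^ 2‖ < 1 := by rw [norm_pow]; exact pow_lt_one₀ (norm_nonneg q) hq two_ne_zero
  let t (m : ℕ) : ℤ → 𝕜 := (Icc (-(m : ℤ)) m : Set ℤ).indicator fun n =>
    gaussianBinomial (q ^ 2) (2 * m) (m + n).toNat * (z ^ n * q ^ (n ^ 2))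
  have h_lim (n : ℤ) : Tendsto (t · n) atTop
      (𝓝 ((∏' j : ℕ, (1 - (q ^ 2) ^ (j + 1)))⁻¹ * (z ^ n * q ^ (n ^ 2)))) := by
    refine ((tendsto_gaussianBinomial_two_mul hQ n).mul_const _).congr' ?_
    filter_upwards [eventually_ge_atTop n.natAbs] with m hm
    have hn : n ∈ (Icc (-(m : ℤ)) m : Set ℤ) := by rw [coe_Icc, Set.mem_Icc]; omega
    simp only [t, Set.indicator_of_mem hn]
  obtain ⟨C, hC⟩ := exists_norm_gaussianBinomial_le hQ
  have h_bound (m : ℕ) (n : ℤ) : ‖t m n‖ ≤ C * ‖z ^ n * q ^ (n ^ 2)‖ :=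
    (norm_indicator_le_norm_self _ _).trans <| by rw [norm_mul]; gcongr; exact hC _ _
  have h := tendsto_tsum_of_dominated_convergence
    ((summable_norm_zpow_mul_zpow_sq z hq).mul_left C) h_lim (.of_forall h_bound)
  simp only [t, ← sum_eq_tsum_indicator, ← jacobi_triple_product_finite hq0 hz, tsum_mul_left] at h
  exact h

/-- The Jacobi triple product identity: for `|q| < 1` and `z ≠ 0`,
`(-qz;q²)_∞ (-q/z;q²)_∞ (q²;q²)_∞ = Σ_{n ∈ ℤ} z^n q^{n²}`. -/
theorem stmt4 (q z : ℂ) (hq : ‖q‖ < 1) (hz : z ≠ 0) :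
    (∏' k : ℕ, (1 + q * z * q ^ (2 * k))) * (∏' k : ℕ, (1 + q / z * q ^ (2 * k))) *
      (∏' k : ℕ, (1 - q ^ (2 * (k + 1))))
    = ∑' n : ℤ, z ^ n * q ^ (n ^ 2) := by
  rcases eq_or_ne q 0 with rfl | hq0
  · rw [tsum_eq_single 0 fun n hn => by rw [zero_zpow _ (pow_ne_zero 2 hn), mul_zero]]
    simp
  have hQ : ‖q ^ 2‖ < 1 := by rw [norm_pow]; exact pow_lt_one₀ (norm_nonneg q) hq two_ne_zero
  have h_prods := (tendsto_prod_one_add_mul_pow_two_mul (q * z) hq).mul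
    (tendsto_prod_one_add_mul_pow_two_mul (q / z) hq)
  simp only [pow_mul q 2 (_ + 1)]
  rw [tendsto_nhds_unique h_prods (tendsto_jacobi_triple_product_finite hq hq0 hz), mul_comm,
    ← mul_assoc, mul_inv_cancel₀ (tprod_one_sub_pow_succ_ne_zero hQ), one_mul]
end

section
/- Pincherle's theorem: let (a_n)_{n≥1}, (b_n)_{n≥1}, (G_n)_{n≥-1} be sequences of complex numbers with a_n ≠ 0 for all n ≥ 1 and G_n = a_n G_{n-2} + b_n G_{n-1} for all n ≥ 1. Let B_n be the denominator convergents of the continued fraction K_{n=1}^∞ (a_n/b_n) (i.e., B_{-1} = 0, B_0 = 1, B_n = b_n B_{n-1} + a_n B_{n-2}). If G_n/B_n → 0 as n → ∞ (with B_n ≠ 0 eventually), then the continued fraction K_{n=1}^∞ (a_n/b_n) converges and its value equals -G_0/G_{-1} (with G_{-1} ≠ 0). -/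
open Filter

/-- Pincherle's theorem. Sequences are indexed with a shift: `G n` here denotes `G_{n-1}`
of the informal statement (so `G 0 = G_{-1}`, `G 1 = G_0`), and likewise `A 0 = A_{-1} = 1`,
`A 1 = A_0 = 0`, `B 0 = B_{-1} = 0`, `B 1 = B_0 = 1`. If `a_n ≠ 0` for `n ≥ 1`, the
recurrence `G_n = a_n G_{n-2} + b_n G_{n-1}` holds, and `G_n / B_n → 0`, then the
continued fraction `K(a_n/b_n)` converges to `-G_0/G_{-1}`. -/
theorem stmt16 (a b : ℕ → ℂ) (G A B : ℕ → ℂ)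
    (ha : ∀ n : ℕ, 1 ≤ n → a n ≠ 0)
    (hG : ∀ n : ℕ, 1 ≤ n → G (n + 1) = a n * G (n - 1) + b n * G n)
    (hA0 : A 0 = 1) (hA1 : A 1 = 0)
    (hArec : ∀ n : ℕ, 1 ≤ n → A (n + 1) = b n * A n + a n * A (n - 1))
    (hB0 : B 0 = 0) (hB1 : B 1 = 1)
    (hBrec : ∀ n : ℕ, 1 ≤ n → B (n + 1) = b n * B n + a n * B (n - 1))
    (hGm1 : G 0 ≠ 0)
    (hBne : ∀ᶠ n in atTop, B n ≠ 0)
    (hlim : Tendsto (fun n => G n / B n) atTop (nhds 0)) :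
    Tendsto (fun n => A n / B n) atTop (nhds (-(G 1) / G 0)) := by
  -- Key identity: G n = G 1 * B n + G 0 * A n
  have key : ∀ n : ℕ, G n = G 1 * B n + G 0 * A n := by
    have step : ∀ n : ℕ, G n = G 1 * B n + G 0 * A n ∧
        G (n + 1) = G 1 * B (n + 1) + G 0 * A (n + 1) := by
      intro n
      induction n with
      | zero => constructor <;> simp [hA0, hA1, hB0, hB1]
      | succ k ih =>
        refine ⟨ih.2, ?_⟩
        have h1 : 1 ≤ k + 1 := Nat.le_add_left 1 k
        rw [hG (k + 1) h1, hArec (k + 1) h1, hBrec (k + 1) h1]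
        simp only [Nat.add_sub_cancel]
        rw [ih.1, ih.2]
        ring
    exact fun n => (step n).1
  have heq : ∀ᶠ n in atTop, (G n / B n - G 1) / G 0 = A n / B n := by
    filter_upwards [hBne] with n hn
    rw [key n]
    field_simp
    ring
  have : Tendsto (fun n => (G n / B n - G 1) / G 0) atTop (nhds ((0 - G 1) / G 0)) :=
    (hlim.sub_const (G 1)).div_const (G 0)
  rw [zero_sub, neg_div] at this
  have := this.congr' heq
  rwa [neg_div]
end
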